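/- arXiv:1008.5143 — 5 statements merged into one kernel-verified Lean document; each statement's English description precedes it below -/
import Mathlib

section
/- Let n ∈ ℕ, 1 ≤ k ≤ n, and let f : [0,1] → [0,1] be monotone increasing. Then the following are equivalent. (i) For every measurable space X, every probability measure P on X and every Markov kernel K from X to [0,1] which is a P-kernel for P, the Markov kernel K_{n,k,f} from X to [0,1], defined by letting K_{n,k,f}(x,·) be the pushforward of the n-fold product measure K(x,·)^{⊗n} on [0,1]^n under the map f ∘ U_{k:n}, is again a P-kernel for P. (ii) f(u) ≥ f_{n,k}(u) for every u ∈ [0,1]. -/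
/-!
Since `U_{k:n}(u) ≤ t` exactly when at least `k` coordinates of `u` are `≤ t`, the kernel
`K_{n,k,f}(x, ·)` gives `[0, α]` the mass `B(q x)`, where `B p = B_{n,p}({k,…,n})` and
`q x = K(x, E)` with `E = f⁻¹[0, α]`, a lower set.

`B' = n b_{n-1,k-1}` increases up to `r = (k-1)/(n-1)` and decreases afterwards, so `B` is convex
on `[0, r]` and concave on `[r, 1]`, and vanishes at `0`. For such a function every `β ∈ (0, 1]`
has a support line `a t + b` (`a, b ≥ 0`) above `B` with `a β + b ≤ f_{n,k}(β)`: the chord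
through the origin of slope `sup_{[β,1]} ψ_{n,k}`, or else the tangent at `β`. Integrating it
gives `∫ B(q) dP ≤ f_{n,k}(β)` whenever `∫ q dP ≤ β`. With `s = sup E`, the P-kernel property
gives `∫ q dP ≤ s`, and `f_{n,k}(s) ≤ α` because `f_{n,k} ≤ f ≤ α` on `E ⊇ [0, s)` and
`f_{n,k}(s) ≤ lim inf_{w ↑ s} f_{n,k}(w)`.

Conversely, for `0 < u ≤ p ≤ 1` take `P = (u/p) δ_true + (1 - u/p) δ_false` on `Bool` and the
kernel `K true = p δ_u + (1 - p) δ_1`, `K false = δ_1`, which is a P-kernel. Its combination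
puts mass at least `(u/p) B(p)` on `[0, f u]`, so `u ψ_{n,k}(p) ≤ f u` for all `p ∈ [u, 1]`,
i.e. `f_{n,k}(u) ≤ f u`.
-/

open MeasureTheory ProbabilityTheory

/-- Binomial upper tail `B_{n,p}({k,…,n})`. -/
noncomputable def binTail (n k : ℕ) (p : ℝ) : ℝ :=
  ∑ j ∈ Finset.Icc k n, (n.choose j : ℝ) * p ^ j * (1 - p) ^ (n - j)

/-- `ψ_{n,k}(p) = p⁻¹ B_{n,p}({k,…,n})`, extended continuously at `0`. -/
noncomputable def psi (n k : ℕ) (p : ℝ) : ℝ :=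
  if p = 0 then (if k = 1 then (n : ℝ) else 0) else p⁻¹ * binTail n k p

/-- `f_{n,k}(u) = u ⋅ sup_{p ∈ [u,1]} ψ_{n,k}(p)`. -/
noncomputable def fnk (n k : ℕ) (u : ℝ) : ℝ := u * sSup (psi n k '' Set.Icc u 1)

/-- The `k`-th order statistic (k-th smallest coordinate) of `u : Fin n → α`,
with default value `d` (irrelevant for `1 ≤ k ≤ n`). -/
noncomputable def orderStat {α : Type*} [LinearOrder α] {n : ℕ} (k : ℕ) (u : Fin n → α)
    (d : α) : α :=
  ((Multiset.map u Finset.univ.val).sort (· ≤ ·)).getD (k - 1) d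

open Set
open scoped ENNReal

lemma hasDerivAt_pow_mul_one_sub_pow (a b : ℕ) (p : ℝ) :
    HasDerivAt (fun q : ℝ => q ^ a * (1 - q) ^ b)
      (a * p ^ (a - 1) * (1 - p) ^ b - b * p ^ a * (1 - p) ^ (b - 1)) p :=
  ((hasDerivAt_pow a p).mul (((hasDerivAt_id' p).const_sub 1).pow b)).congr_deriv
    (by simp only [Pi.pow_apply]; ring)

lemma pow_mul_one_sub_pow_deriv_mul_eq (a b : ℕ) (p : ℝ) :
    (a * p ^ (a - 1) * (1 - p) ^ b - b * p ^ a * (1 - p) ^ (b - 1)) * (p * (1 - p))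
      = p ^ a * (1 - p) ^ b * (a - (a + b) * p) := by
  have ha : (a : ℝ) * p ^ (a - 1) * p = a * p ^ a := by cases a <;> simp [pow_succ]; ring
  have hb : (b : ℝ) * (1 - p) ^ (b - 1) * (1 - p) = b * (1 - p) ^ b := by
    cases b <;> simp [pow_succ]; ring
  linear_combination (1 - p) ^ b * (1 - p) * ha - p ^ a * p * hb

lemma monotoneOn_pow_mul_one_sub_pow (a b : ℕ) :
    MonotoneOn (fun p : ℝ => p ^ a * (1 - p) ^ b) (Icc 0 (a / (a + b))) := by
  refine monotoneOn_of_deriv_nonneg (convex_Icc _ _) (by fun_prop) (by fun_prop) fun p hp => ?_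
  rw [interior_Icc] at hp
  rw [(hasDerivAt_pow_mul_one_sub_pow a b p).deriv]
  have hab : (0 : ℝ) < a + b := by
    by_contra! h
    have : (a : ℝ) / (a + b) ≤ 0 := div_nonpos_of_nonneg_of_nonpos (by positivity) h
    linarith [hp.1, hp.2]
  have hp1 : p < 1 := hp.2.trans_le (div_le_one_of_le₀ (by simp) hab.le)
  have hsign : 0 ≤ (a : ℝ) - (a + b) * p := by
    have := (lt_div_iff₀ hab).mp hp.2; linarith
  refine nonneg_of_mul_nonneg_left ?_ (mul_pos hp.1 (sub_pos.mpr hp1))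
  rw [pow_mul_one_sub_pow_deriv_mul_eq]
  have := hp.1.le
  have := sub_nonneg.mpr hp1.le
  positivity

lemma antitoneOn_pow_mul_one_sub_pow (a b : ℕ) :
    AntitoneOn (fun p : ℝ => p ^ a * (1 - p) ^ b) (Icc (a / (a + b)) 1) := by
  refine antitoneOn_of_deriv_nonpos (convex_Icc _ _) (by fun_prop) (by fun_prop) fun p hp => ?_
  rw [interior_Icc] at hp
  rw [(hasDerivAt_pow_mul_one_sub_pow a b p).deriv]
  have hp0 : 0 < p := lt_of_le_of_lt (by positivity) hp.1
  have hsign : (a : ℝ) - (a + b) * p ≤ 0 := by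
    rcases (show (0 : ℝ) ≤ a + b by positivity).eq_or_lt with hab | hab
    · have ha : (a : ℝ) = 0 := by linarith [(Nat.cast_nonneg b : (0 : ℝ) ≤ b)]
      have hb : (b : ℝ) = 0 := by linarith
      simp [ha, hb]
    · have := (div_lt_iff₀ hab).mp hp.1; linarith
  refine nonpos_of_mul_nonpos_left ?_ (mul_pos hp0 (sub_pos.mpr hp.2))
  rw [pow_mul_one_sub_pow_deriv_mul_eq]
  have := sub_nonneg.mpr hp.2.le
  exact mul_nonpos_of_nonneg_of_nonpos (by positivity) hsign

lemma bernsteinPolynomial_eval_eq (n ν : ℕ) (p : ℝ) :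
    (bernsteinPolynomial ℝ n ν).eval p = n.choose ν * (p ^ ν * (1 - p) ^ (n - ν)) := by
  simp [bernsteinPolynomial, mul_assoc]

lemma bernsteinPolynomial_eval_nonneg (n ν : ℕ) {p : ℝ} (hp : p ∈ Icc 0 1) :
    0 ≤ (bernsteinPolynomial ℝ n ν).eval p := by
  rw [bernsteinPolynomial_eval_eq]
  have := sub_nonneg.mpr hp.2; have := hp.1
  positivity

lemma monotoneOn_bernsteinPolynomial_eval {n ν : ℕ} (hν : ν ≤ n) :
    MonotoneOn (fun p : ℝ => (bernsteinPolynomial ℝ n ν).eval p) (Icc 0 (ν / n)) := by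
  intro x hx y hy hxy
  have hn : (ν : ℝ) + (n - ν : ℕ) = n := by rw [← Nat.cast_add, Nat.add_sub_cancel' hν]
  simp only [bernsteinPolynomial_eval_eq]
  exact mul_le_mul_of_nonneg_left
    (monotoneOn_pow_mul_one_sub_pow ν (n - ν) (by rwa [hn]) (by rwa [hn]) hxy) (by positivity)

lemma antitoneOn_bernsteinPolynomial_eval {n ν : ℕ} (hν : ν ≤ n) :
    AntitoneOn (fun p : ℝ => (bernsteinPolynomial ℝ n ν).eval p) (Icc (ν / n) 1) := by
  intro x hx y hy hxy
  have hn : (ν : ℝ) + (n - ν : ℕ) = n := by rw [← Nat.cast_add, Nat.add_sub_cancel' hν]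
  simp only [bernsteinPolynomial_eval_eq]
  exact mul_le_mul_of_nonneg_left
    (antitoneOn_pow_mul_one_sub_pow ν (n - ν) (by rwa [hn]) (by rwa [hn]) hxy) (by positivity)

lemma ConvexOn.div_le_div_of_map_zero {g : ℝ → ℝ} {r s t : ℝ} (hg : ConvexOn ℝ (Icc 0 r) g)
    (hg0 : g 0 = 0) (hs : 0 < s) (hst : s ≤ t) (ht : t ≤ r) : g s / s ≤ g t / t := by
  simpa [hg0] using hg.secant_mono (a := 0) ⟨le_rfl, hs.le.trans (hst.trans ht)⟩
    ⟨hs.le, hst.trans ht⟩ ⟨hs.le.trans hst, ht⟩ hs.ne' (hs.trans_le hst).ne' hst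

lemma ConcaveOn.le_add_mul_sub_of_hasDerivAt {g : ℝ → ℝ} {S : Set ℝ} {x y a : ℝ}
    (hg : ConcaveOn ℝ S g) (hx : x ∈ S) (hy : y ∈ S) (hga : HasDerivAt g a x) :
    g y ≤ g x + a * (y - x) := by
  rcases lt_trichotomy y x with hyx | rfl | hxy
  · have := hg.le_slope_of_hasDerivAt hy hx hyx hga
    rw [slope_def_field, le_div_iff₀ (sub_pos.mpr hyx)] at this
    linarith
  · simp
  · have := hg.slope_le_of_hasDerivAt hx hy hxy hga
    rw [slope_def_field, div_le_iff₀ (sub_pos.mpr hxy)] at this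
    linarith

lemma le_tangent_of_convexOn_concaveOn {g : ℝ → ℝ} {r β a : ℝ} (hconv : ConvexOn ℝ (Icc 0 r) g)
    (hconc : ConcaveOn ℝ (Icc r 1) g) (hg0 : g 0 = 0) (hβ : β ∈ Icc r 1) (hga : HasDerivAt g a β)
    (hb : 0 ≤ g β - a * β) {t : ℝ} (ht : t ∈ Icc 0 1) : g t ≤ a * t + (g β - a * β) := by
  have htangent : ∀ t ∈ Icc r 1, g t ≤ a * t + (g β - a * β) := fun t ht => by
    linarith [hconc.le_add_mul_sub_of_hasDerivAt hβ ht hga]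
  rcases le_or_gt r t with hrt | htr
  · exact htangent t ⟨hrt, ht.2⟩
  rcases ht.1.eq_or_lt with rfl | ht0
  · simpa [hg0] using hb
  have hr0 : 0 < r := ht0.trans htr
  have hsecant := hconv.div_le_div_of_map_zero hg0 ht0 htr.le le_rfl
  rw [div_le_div_iff₀ ht0 hr0] at hsecant
  have := htangent r ⟨le_rfl, hβ.1.trans hβ.2⟩
  nlinarith

/-- Used contrapositively: a point `t < β` with a larger ratio `g t / t` forces the tangent
at `β` to lie in the concave part and to have a nonnegative intercept. -/
lemma div_le_div_of_convexOn_concaveOn {g : ℝ → ℝ} {r β a : ℝ} (hconv : ConvexOn ℝ (Icc 0 r) g)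
    (hconc : ConcaveOn ℝ (Icc r 1) g) (hg0 : g 0 = 0) (hβ : β ∈ Ioc 0 1)
    (hga : HasDerivAt g a β) (h : β ≤ r ∨ g β - a * β < 0) {t : ℝ} (ht : t ∈ Ioc 0 β) :
    g t / t ≤ g β / β := by
  rcases le_or_gt β r with hβr | hrβ
  · exact hconv.div_le_div_of_map_zero hg0 ht.1 ht.2 hβr
  have hb := h.resolve_left hrβ.not_ge
  have hconcave_part : ∀ t ∈ Icc r β, 0 < t → g t / t ≤ g β / β := fun t ht ht0 => by
    have := hconc.le_add_mul_sub_of_hasDerivAt ⟨ht.1.trans ht.2, hβ.2⟩ ⟨ht.1, ht.2.trans hβ.2⟩ hga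
    rw [div_le_div_iff₀ ht0 hβ.1]
    nlinarith [ht.2]
  rcases le_or_gt r t with hrt | htr
  · exact hconcave_part t ⟨hrt, ht.2⟩ ht.1
  · exact (hconv.div_le_div_of_map_zero hg0 ht.1 htr.le le_rfl).trans
      (hconcave_part r ⟨le_rfl, hrβ.le⟩ (ht.1.trans htr))

theorem exists_supportLine_of_unimodal_deriv {g g' : ℝ → ℝ} {r β c : ℝ}
    (hg : ∀ x, HasDerivAt g (g' x) x) (hg0 : g 0 = 0) (hg'0 : ∀ x ∈ Icc 0 1, 0 ≤ g' x)
    (hmono : MonotoneOn g' (Icc 0 r)) (hanti : AntitoneOn g' (Icc r 1))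
    (hβ : β ∈ Ioc 0 1) (hc : ∀ p ∈ Icc β 1, g p / p ≤ c) :
    ∃ a b, 0 ≤ a ∧ 0 ≤ b ∧ (∀ t ∈ Icc 0 1, g t ≤ a * t + b) ∧ a * β + b ≤ β * c := by
  have hcont : Continuous g := continuous_iff_continuousAt.mpr fun x => (hg x).continuousAt
  have hdiff : Differentiable ℝ g := fun x => (hg x).differentiableAt
  have hderiv : deriv g = g' := funext fun x => (hg x).deriv
  have hconv : ConvexOn ℝ (Icc 0 r) g := (hderiv ▸ hmono.mono interior_subset).convexOn_of_deriv
    (convex_Icc _ _) hcont.continuousOn hdiff.differentiableOn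
  have hconc : ConcaveOn ℝ (Icc r 1) g := (hderiv ▸ hanti.mono interior_subset).concaveOn_of_deriv
    (convex_Icc _ _) hcont.continuousOn hdiff.differentiableOn
  have hgβ : 0 ≤ g β := hg0 ▸ monotoneOn_of_deriv_nonneg (convex_Icc 0 1) hcont.continuousOn
    hdiff.differentiableOn (fun x hx => hderiv ▸ hg'0 x (interior_subset hx))
    ⟨le_rfl, zero_le_one⟩ ⟨hβ.1.le, hβ.2⟩ hβ.1.le
  have hβc : g β / β ≤ c := hc β ⟨le_rfl, hβ.2⟩
  -- Either the line `c t` through the origin works, or some `t₀ < β` has a larger ratio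
  -- `g t₀ / t₀`; then `β` lies in the concave part and the tangent at `β` works.
  by_cases hchord : ∀ t ∈ Ioc 0 1, g t / t ≤ c
  · refine ⟨c, 0, (div_nonneg hgβ hβ.1.le).trans hβc, le_rfl, fun t ht => ?_, by simp [mul_comm]⟩
    rcases ht.1.eq_or_lt with rfl | ht0
    · simp [hg0]
    · simpa [mul_comm] using (div_le_iff₀ ht0).mp (hchord t ⟨ht0, ht.2⟩)
  push Not at hchord
  obtain ⟨t₀, ht₀, hct₀⟩ := hchord
  have ht₀β : t₀ < β := lt_of_not_ge fun h => (hct₀.trans_le (hc t₀ ⟨h, ht₀.2⟩)).false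
  have htangent : r < β ∧ 0 ≤ g β - g' β * β := by
    by_contra! h
    have := div_le_div_of_convexOn_concaveOn hconv hconc hg0 hβ (hg β)
      ((le_or_gt β r).imp_right h) ⟨ht₀.1, ht₀β.le⟩
    linarith
  refine ⟨g' β, g β - g' β * β, hg'0 β ⟨hβ.1.le, hβ.2⟩, htangent.2,
    fun t ht => le_tangent_of_convexOn_concaveOn hconv hconc hg0 ⟨htangent.1.le, hβ.2⟩ (hg β)
      htangent.2 ht, ?_⟩
  calc g' β * β + (g β - g' β * β) = β * (g β / β) := by rw [mul_div_cancel₀ _ hβ.1.ne'] ; ring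
    _ ≤ β * c := mul_le_mul_of_nonneg_left hβc hβ.1.le

lemma binTail_eq_eval_sum_bernsteinPolynomial (n k : ℕ) (p : ℝ) :
    binTail n k p = (∑ j ∈ Finset.Icc k n, bernsteinPolynomial ℝ n j).eval p := by
  simp [binTail, bernsteinPolynomial, Polynomial.eval_finsetSum]

lemma hasDerivAt_binTail {n k : ℕ} (hk : 1 ≤ k) (hkn : k ≤ n) (p : ℝ) :
    HasDerivAt (binTail n k) (n * (bernsteinPolynomial ℝ (n - 1) (k - 1)).eval p) p := by
  rw [show binTail n k = _ from funext (binTail_eq_eval_sum_bernsteinPolynomial n k)]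
  refine (Polynomial.hasDerivAt _ p).congr_deriv ?_
  set F : ℕ → Polynomial ℝ := fun j => bernsteinPolynomial ℝ (n - 1) (j - 1)
  -- each term differentiates to `n` times a difference of consecutive Bernstein polynomials
  -- of degree `n - 1`, so the sum telescopes
  have htel : ∑ j ∈ Finset.Icc k n, Polynomial.derivative (bernsteinPolynomial ℝ n j)
      = -(n * ∑ j ∈ Finset.Ico k (n + 1), (F (j + 1) - F j)) := by
    rw [Finset.mul_sum, ← Finset.sum_neg_distrib, Finset.Ico_add_one_right_eq_Icc]
    refine Finset.sum_congr rfl fun j hj => ?_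
    obtain ⟨i, rfl⟩ : ∃ i, j = i + 1 := ⟨j - 1, by grind⟩
    simp only [F, bernsteinPolynomial.derivative_succ, add_tsub_cancel_right]
    ring
  rw [map_sum, htel, Finset.sum_Ico_sub _ (by omega)]
  simp [F, bernsteinPolynomial.eq_zero_of_lt ℝ (show n - 1 < n + 1 - 1 by omega)]

lemma binTail_zero {n k : ℕ} (hk : 1 ≤ k) : binTail n k 0 = 0 :=
  Finset.sum_eq_zero fun j hj => by simp [(Finset.mem_Icc.mp hj).1.trans_lt' hk |>.ne']

lemma binTail_le_one (n k : ℕ) {p : ℝ} (hp : p ∈ Icc 0 1) : binTail n k p ≤ 1 := by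
  have hsum := congrArg (Polynomial.eval p) (bernsteinPolynomial.sum ℝ n)
  rw [Polynomial.eval_finsetSum, Polynomial.eval_one] at hsum
  rw [binTail_eq_eval_sum_bernsteinPolynomial, Polynomial.eval_finsetSum, ← hsum]
  refine Finset.sum_le_sum_of_subset_of_nonneg (fun j hj => ?_) fun j _ _ => ?_
  · simpa [Nat.lt_succ_iff] using (Finset.mem_Icc.mp hj).2
  · exact bernsteinPolynomial_eval_nonneg n j hp

lemma monotoneOn_binTail {n k : ℕ} (hk : 1 ≤ k) (hkn : k ≤ n) :
    MonotoneOn (binTail n k) (Icc 0 1) :=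
  monotoneOn_of_deriv_nonneg (convex_Icc 0 1)
    (fun x _ => (hasDerivAt_binTail hk hkn x).continuousAt.continuousWithinAt)
    (fun x _ => (hasDerivAt_binTail hk hkn x).differentiableAt.differentiableWithinAt)
    fun x hx => (hasDerivAt_binTail hk hkn x).deriv ▸
      mul_nonneg n.cast_nonneg (bernsteinPolynomial_eval_nonneg _ _ (interior_subset hx))

lemma psi_eq_div (n k : ℕ) {p : ℝ} (hp : p ≠ 0) : psi n k p = binTail n k p / p := by
  rw [psi, if_neg hp, inv_mul_eq_div]

lemma bddAbove_psi_image (n k : ℕ) {w : ℝ} (hw : 0 < w) : BddAbove (psi n k '' Icc w 1) := by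
  refine ⟨1 / w, ?_⟩
  rintro _ ⟨p, hp, rfl⟩
  have hp0 : 0 < p := hw.trans_le hp.1
  rw [psi_eq_div n k hp0.ne']
  exact div_le_div₀ zero_le_one (binTail_le_one n k ⟨hp0.le, hp.2⟩) hw hp.1

lemma fnk_le_iff (n k : ℕ) {u c : ℝ} (hu : u ∈ Ioc 0 1) :
    fnk n k u ≤ c ↔ ∀ p ∈ Icc u 1, u * psi n k p ≤ c := by
  rw [fnk, mul_comm, ← le_div_iff₀ hu.1,
    csSup_le_iff (bddAbove_psi_image n k hu.1) ((nonempty_Icc.mpr hu.2).image _),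
    forall_mem_image]
  exact forall₂_congr fun p _ => by rw [le_div_iff₀' hu.1]

lemma exists_supportLine_binTail {n k : ℕ} (hk : 1 ≤ k) (hkn : k ≤ n) {β : ℝ} (hβ : β ∈ Ioc 0 1) :
    ∃ a b, 0 ≤ a ∧ 0 ≤ b ∧ (∀ t ∈ Icc 0 1, binTail n k t ≤ a * t + b) ∧
      a * β + b ≤ fnk n k β := by
  have hν : k - 1 ≤ n - 1 := by omega
  refine exists_supportLine_of_unimodal_deriv (hasDerivAt_binTail hk hkn) (binTail_zero hk)
    (fun x hx => mul_nonneg n.cast_nonneg (bernsteinPolynomial_eval_nonneg _ _ hx))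
    (fun x hx y hy hxy => mul_le_mul_of_nonneg_left
      (monotoneOn_bernsteinPolynomial_eval hν hx hy hxy) (Nat.cast_nonneg n))
    (fun x hx y hy hxy => mul_le_mul_of_nonneg_left
      (antitoneOn_bernsteinPolynomial_eval hν hx hy hxy) (Nat.cast_nonneg n)) hβ fun p hp => ?_
  rw [← psi_eq_div n k (hβ.1.trans_le hp.1).ne']
  exact le_csSup (bddAbove_psi_image n k hβ.1) (mem_image_of_mem _ hp)

lemma fnk_le_of_forall_lt {n k : ℕ} {s c : ℝ} (hs : s ∈ Ioc 0 1)
    (h : ∀ w ∈ Ioo 0 s, fnk n k w ≤ c) : fnk n k s ≤ c := by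
  rw [fnk_le_iff n k hs]
  intro p hp
  refine le_of_tendsto (x := nhdsWithin s (Iio s))
    ((Filter.tendsto_id.mul_const (psi n k p)).mono_left nhdsWithin_le_nhds) ?_
  filter_upwards [Ioo_mem_nhdsLT hs.1] with w hw
  exact (fnk_le_iff n k ⟨hw.1, hw.2.le.trans hs.2⟩).mp (h w hw) p ⟨hw.2.le.trans hp.1, hp.2⟩

lemma List.Pairwise.get_mem_iff_lt_countP {α : Type*} [LinearOrder α] {l : List α}
    (hl : l.Pairwise (· ≤ ·)) {E : Set α} (hE : IsLowerSet E) [DecidablePred (· ∈ E)]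
    (i : Fin l.length) : l.get i ∈ E ↔ (i : ℕ) < l.countP (· ∈ E) := by
  constructor
  · intro hi
    have htake : (l.take (i + 1)).countP (· ∈ E) = i + 1 := by
      rw [List.countP_eq_length.mpr, List.length_take, min_eq_left (by omega)]
      intro a ha
      obtain ⟨j, hj, rfl⟩ := List.mem_take_iff_getElem.mp ha
      simpa using hE (hl.rel_get_of_le (a := ⟨j, by omega⟩) (Fin.mk_le_mk.mpr (by omega))) hi
    have := (List.take_sublist (i + 1) l).countP_le (p := (· ∈ E))
    omega
  · intro hi
    by_contra hni
    have hdrop : (l.drop i).countP (· ∈ E) = 0 := by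
      rw [List.countP_eq_zero]
      intro a ha haE
      obtain ⟨j, hj, rfl⟩ := List.mem_drop_iff_getElem.mp ha
      exact hni (hE (hl.rel_get_of_le (b := ⟨i + j, by omega⟩)
        (Fin.mk_le_mk.mpr (Nat.le_add_right i j))) (by simpa using haE))
    have hsplit := List.countP_append (p := (· ∈ E)) (l₁ := l.take i) (l₂ := l.drop i)
    rw [List.take_append_drop, hdrop] at hsplit
    have := List.countP_le_length (l := l.take i) (p := (· ∈ E))
    rw [List.length_take] at this
    omega

lemma orderStat_mem_iff {α : Type*} [LinearOrder α] {n k : ℕ} (hk : 1 ≤ k) (hkn : k ≤ n)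
    {E : Set α} (hE : IsLowerSet E) [DecidablePred (· ∈ E)] (v : Fin n → α) (d : α) :
    orderStat k v d ∈ E ↔ k ≤ (Finset.univ.filter fun i => v i ∈ E).card := by
  set l := (Multiset.map v Finset.univ.val).sort (· ≤ ·)
  have hlen : l.length = n := by simp [l]
  have hk' : k - 1 < l.length := by omega
  have hcount : l.countP (· ∈ E) = (Finset.univ.filter fun i => v i ∈ E).card := by
    rw [← Multiset.coe_countP, Multiset.sort_eq, Multiset.countP_map, Finset.card,
      Finset.filter_val]
  have hsorted : l.Pairwise (· ≤ ·) := Multiset.pairwise_sort _ _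
  have := hsorted.get_mem_iff_lt_countP hE ⟨k - 1, hk'⟩
  rw [List.get_eq_getElem, hcount] at this
  rw [orderStat, List.getD_eq_getElem l d hk', this, Fin.val_mk]
  omega

section Binomial

variable {Ω : Type*}

lemma mem_pi_ite_iff {n : ℕ} (E : Set Ω) [DecidablePred (· ∈ E)] (A : Finset (Fin n))
    (v : Fin n → Ω) :
    v ∈ univ.pi (fun i => if i ∈ A then E else Eᶜ) ↔ Finset.univ.filter (fun i => v i ∈ E) = A := by
  simp only [mem_univ_pi, Finset.ext_iff, Finset.mem_filter, Finset.mem_univ, true_and]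
  exact forall_congr' fun i => by by_cases hi : i ∈ A <;> simp [hi]

lemma setOf_le_card_filter_eq_biUnion (n k : ℕ) (E : Set Ω) [DecidablePred (· ∈ E)] :
    {v : Fin n → Ω | k ≤ (Finset.univ.filter fun i => v i ∈ E).card}
      = ⋃ A ∈ Finset.univ.filter (fun A : Finset (Fin n) => k ≤ A.card),
          univ.pi fun i => if i ∈ A then E else Eᶜ := by
  ext v
  simp only [mem_ofPred_eq, mem_iUnion, mem_pi_ite_iff, Finset.mem_filter, Finset.mem_univ,
    true_and, exists_prop, exists_eq_right']

lemma measurableSet_pi_ite [MeasurableSpace Ω] {n : ℕ} {E : Set Ω} [DecidablePred (· ∈ E)]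
    (hE : MeasurableSet E) (A : Finset (Fin n)) :
    MeasurableSet (univ.pi fun i => if i ∈ A then E else Eᶜ) :=
  .univ_pi fun i => by split_ifs; exacts [hE, hE.compl]

lemma measurableSet_setOf_le_card_filter [MeasurableSpace Ω] (n k : ℕ) {E : Set Ω}
    [DecidablePred (· ∈ E)] (hE : MeasurableSet E) :
    MeasurableSet {v : Fin n → Ω | k ≤ (Finset.univ.filter fun i => v i ∈ E).card} := by
  rw [setOf_le_card_filter_eq_biUnion]
  exact .biUnion (Finset.countable_toSet _) fun A _ => measurableSet_pi_ite hE A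

lemma measure_pi_setOf_le_card_filter [MeasurableSpace Ω] (μ : Measure Ω) [SigmaFinite μ]
    (n k : ℕ) {E : Set Ω} [DecidablePred (· ∈ E)] (hE : MeasurableSet E) :
    Measure.pi (fun _ : Fin n => μ) {v | k ≤ (Finset.univ.filter fun i => v i ∈ E).card}
      = ∑ j ∈ Finset.Icc k n, (n.choose j : ℝ≥0∞) * μ E ^ j * μ Eᶜ ^ (n - j) := by
  have hcell : ∀ A : Finset (Fin n), Measure.pi (fun _ => μ)
      (univ.pi fun i => if i ∈ A then E else Eᶜ) = μ E ^ A.card * μ Eᶜ ^ (n - A.card) := by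
    intro A
    rw [Measure.pi_pi]
    simp_rw [apply_ite μ]
    rw [Finset.prod_ite, Finset.prod_const, Finset.prod_const, Finset.filter_mem_eq_inter,
      Finset.univ_inter, Finset.filter_not, Finset.card_sdiff, Finset.filter_mem_eq_inter]
    simp
  have hrange : (Finset.range (n + 1)).filter (k ≤ ·) = Finset.Icc k n := by
    ext j; simp only [Finset.mem_filter, Finset.mem_range, Finset.mem_Icc]; omega
  rw [setOf_le_card_filter_eq_biUnion, measure_biUnion_finset,
    Finset.sum_congr rfl fun A _ => hcell A, Finset.sum_filter, ← Finset.powerset_univ,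
    Finset.sum_powerset_apply_card (fun m => if k ≤ m then μ E ^ m * μ Eᶜ ^ (n - m) else 0),
    Finset.card_univ, Fintype.card_fin, ← hrange, Finset.sum_filter]
  · simp [mul_assoc]
  · intro A _ B _ hAB
    exact disjoint_left.mpr fun v hA hB =>
      hAB (((mem_pi_ite_iff E A v).mp hA).symm.trans ((mem_pi_ite_iff E B v).mp hB))
  · exact fun A _ => measurableSet_pi_ite hE A

lemma sum_choose_mul_measure_eq_ofReal_binTail [MeasurableSpace Ω] (μ : Measure Ω)
    [IsProbabilityMeasure μ] (n k : ℕ) {E : Set Ω} (hE : MeasurableSet E) :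
    ∑ j ∈ Finset.Icc k n, (n.choose j : ℝ≥0∞) * μ E ^ j * μ Eᶜ ^ (n - j)
      = ENNReal.ofReal (binTail n k (μ.real E)) := by
  have h0 : 0 ≤ μ.real E := measureReal_nonneg
  have h1 : 0 ≤ 1 - μ.real E := sub_nonneg.mpr measureReal_le_one
  rw [binTail, ENNReal.ofReal_sum_of_nonneg fun j _ => by positivity]
  refine Finset.sum_congr rfl fun j _ => ?_
  rw [ENNReal.ofReal_mul (by positivity), ENNReal.ofReal_mul (by positivity),
    ENNReal.ofReal_pow h0, ENNReal.ofReal_pow h1, ENNReal.ofReal_natCast, ofReal_measureReal,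
    ← probReal_compl_eq_one_sub hE, ofReal_measureReal]

end Binomial

lemma measure_pi_orderStat_mem {α : Type*} [LinearOrder α] [MeasurableSpace α] (μ : Measure α)
    [IsProbabilityMeasure μ] {n k : ℕ} (hk : 1 ≤ k) (hkn : k ≤ n) {E : Set α} (hE : IsLowerSet E)
    (hEm : MeasurableSet E) (d : α) :
    Measure.pi (fun _ : Fin n => μ) {v | orderStat k v d ∈ E}
      = ENNReal.ofReal (binTail n k (μ.real E)) := by
  classical
  have hset : {v : Fin n → α | orderStat k v d ∈ E}
      = {v | k ≤ (Finset.univ.filter fun i => v i ∈ E).card} :=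
    ext fun v => orderStat_mem_iff hk hkn hE v d
  rw [hset, measure_pi_setOf_le_card_filter μ n k hEm,
    sum_choose_mul_measure_eq_ofReal_binTail μ n k hEm]

lemma measurable_orderStat {α : Type*} [LinearOrder α] [TopologicalSpace α] [OrderTopology α]
    [SecondCountableTopology α] [MeasurableSpace α] [BorelSpace α] {n k : ℕ} (hk : 1 ≤ k)
    (hkn : k ≤ n) (d : α) : Measurable fun v : Fin n → α => orderStat k v d := by
  classical
  refine measurable_of_Iic fun t => ?_
  have hset : (fun v : Fin n → α => orderStat k v d) ⁻¹' Iic t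
      = {v | k ≤ (Finset.univ.filter fun i => v i ∈ Iic t).card} :=
    ext fun v => orderStat_mem_iff hk hkn (isLowerSet_Iic t) v d
  rw [hset]
  exact measurableSet_setOf_le_card_filter n k (measurableSet_Iic (a := t))

lemma lintegral_ofReal_binTail_le {X : Type*} [MeasurableSpace X] (P : Measure X)
    [IsProbabilityMeasure P] {n k : ℕ} (hk : 1 ≤ k) (hkn : k ≤ n) {q : X → ℝ} (hq : Measurable q)
    (hq01 : ∀ x, q x ∈ Icc 0 1) {β : ℝ} (hβ : β ∈ Icc 0 1)
    (hint : ∫⁻ x, ENNReal.ofReal (q x) ∂P ≤ ENNReal.ofReal β) :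
    ∫⁻ x, ENNReal.ofReal (binTail n k (q x)) ∂P ≤ ENNReal.ofReal (fnk n k β) := by
  rcases hβ.1.eq_or_lt with rfl | hβ0
  · rw [ENNReal.ofReal_zero, nonpos_iff_eq_zero, lintegral_eq_zero_iff hq.ennreal_ofReal] at hint
    have hzero : ∀ᵐ x ∂P, ENNReal.ofReal (binTail n k (q x)) = 0 := by
      filter_upwards [hint] with x hx
      have : q x = 0 := le_antisymm (ENNReal.ofReal_eq_zero.mp hx) (hq01 x).1
      simp [this, binTail_zero hk]
    simp [lintegral_congr_ae hzero]
  obtain ⟨a, b, ha, hb, hline, hfnk⟩ := exists_supportLine_binTail hk hkn ⟨hβ0, hβ.2⟩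
  calc ∫⁻ x, ENNReal.ofReal (binTail n k (q x)) ∂P
      ≤ ∫⁻ x, (ENNReal.ofReal a * ENNReal.ofReal (q x) + ENNReal.ofReal b) ∂P := by
        refine lintegral_mono fun x => ?_
        rw [← ENNReal.ofReal_mul ha, ← ENNReal.ofReal_add (by have := (hq01 x).1; positivity) hb]
        exact ENNReal.ofReal_le_ofReal (hline _ (hq01 x))
    _ = ENNReal.ofReal a * ∫⁻ x, ENNReal.ofReal (q x) ∂P + ENNReal.ofReal b := by
        rw [lintegral_add_right _ measurable_const, lintegral_const_mul _ hq.ennreal_ofReal,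
          lintegral_const, measure_univ, mul_one]
    _ ≤ ENNReal.ofReal a * ENNReal.ofReal β + ENNReal.ofReal b := by gcongr
    _ = ENNReal.ofReal (a * β + b) := by
        rw [ENNReal.ofReal_add (by positivity) hb, ENNReal.ofReal_mul ha]
    _ ≤ ENNReal.ofReal (fnk n k β) := ENNReal.ofReal_le_ofReal hfnk

lemma fnk_sSup_le {n k : ℕ} {E : Set unitInterval} (hE : IsLowerSet E) {c : ℝ} (hc : 0 ≤ c)
    (h : ∀ u ∈ E, fnk n k u ≤ c) : fnk n k (sSup E : unitInterval) ≤ c := by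
  set s := sSup E
  by_cases hs : s ∈ E
  · exact h s hs
  rcases s.2.1.eq_or_lt with h0 | h0
  · simpa [fnk, ← h0] using hc
  refine fnk_le_of_forall_lt ⟨h0, s.2.2⟩ fun w hw => ?_
  obtain ⟨e, he, hwe⟩ := lt_sSup_iff.mp
    (show (⟨w, hw.1.le, hw.2.le.trans s.2.2⟩ : unitInterval) < s from hw.2)
  exact h _ (hE hwe.le he)

def IsPKernel {X : Type*} [MeasurableSpace X] (P : Measure X) (κ : X → Measure unitInterval) :
    Prop :=
  ∀ α : unitInterval, ∫⁻ x, κ x (Iic α) ∂P ≤ ENNReal.ofReal α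

/-- The paper's `K_{n,k,f}`. -/
noncomputable def orderStatKernel (n k : ℕ) (f : unitInterval → unitInterval) {X : Type*}
    (κ : X → Measure unitInterval) (x : X) : Measure unitInterval :=
  (Measure.pi fun _ : Fin n => κ x).map fun u => f (orderStat k u 0)

lemma map_orderStat_apply_Iic {n k : ℕ} (hk : 1 ≤ k) (hkn : k ≤ n)
    {f : unitInterval → unitInterval} (hf : Monotone f) (μ : Measure unitInterval)
    [IsProbabilityMeasure μ] (α : unitInterval) :
    (Measure.pi fun _ : Fin n => μ).map (fun u => f (orderStat k u 0)) (Iic α)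
      = ENNReal.ofReal (binTail n k (μ.real (f ⁻¹' Iic α))) := by
  have hm : Measurable fun u : Fin n → unitInterval => f (orderStat k u 0) :=
    hf.measurable.comp (measurable_orderStat hk hkn 0)
  rw [Measure.map_apply hm measurableSet_Iic]
  exact measure_pi_orderStat_mem μ hk hkn ((isLowerSet_Iic α).preimage hf)
    (hf.measurable measurableSet_Iic) 0

theorem isPKernel_orderStatKernel {n k : ℕ} (hk : 1 ≤ k) (hkn : k ≤ n)
    {f : unitInterval → unitInterval} (hf : Monotone f) (hfnk : ∀ u : unitInterval, fnk n k u ≤ f u)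
    {X : Type*} [MeasurableSpace X] {P : Measure X} [IsProbabilityMeasure P]
    {K : Kernel X unitInterval} [IsMarkovKernel K] (hK : IsPKernel P K) :
    IsPKernel P (orderStatKernel n k f K) := by
  intro α
  set E := f ⁻¹' Iic α
  have hE : MeasurableSet E := hf.measurable measurableSet_Iic
  have hint : ∫⁻ x, ENNReal.ofReal ((K x).real E) ∂P ≤ ENNReal.ofReal (sSup E : unitInterval) :=
    calc ∫⁻ x, ENNReal.ofReal ((K x).real E) ∂P = ∫⁻ x, K x E ∂P :=
          lintegral_congr fun x => ofReal_measureReal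
      _ ≤ ∫⁻ x, K x (Iic (sSup E)) ∂P := lintegral_mono fun x => measure_mono fun u => le_sSup
      _ ≤ _ := hK _
  calc ∫⁻ x, orderStatKernel n k f K x (Iic α) ∂P
      = ∫⁻ x, ENNReal.ofReal (binTail n k ((K x).real E)) ∂P :=
        lintegral_congr fun x => map_orderStat_apply_Iic hk hkn hf (K x) α
    _ ≤ ENNReal.ofReal (fnk n k (sSup E : unitInterval)) :=
        lintegral_ofReal_binTail_le P hk hkn (K.measurable_coe hE).ennreal_toReal
          (fun x => ⟨measureReal_nonneg, measureReal_le_one⟩) (sSup E).2 hint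
    _ ≤ ENNReal.ofReal α := ENNReal.ofReal_le_ofReal
        (fnk_sSup_le ((isLowerSet_Iic α).preimage hf) α.2.1 fun u hu => (hfnk u).trans hu)

section TwoPoint

variable {α : Type*} [MeasurableSpace α]

noncomputable def twoPoint (w : ℝ) (x y : α) : Measure α :=
  ENNReal.ofReal w • Measure.dirac x + ENNReal.ofReal (1 - w) • Measure.dirac y

lemma isProbabilityMeasure_twoPoint {w : ℝ} (hw : w ∈ Icc 0 1) (x y : α) :
    IsProbabilityMeasure (twoPoint w x y) := by
  constructor
  simp [twoPoint, ← ENNReal.ofReal_add hw.1 (sub_nonneg.mpr hw.2)]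

lemma twoPoint_apply [MeasurableSingletonClass α] (w : ℝ) (x y : α) (s : Set α) :
    twoPoint w x y s
      = ENNReal.ofReal w * s.indicator 1 x + ENNReal.ofReal (1 - w) * s.indicator 1 y := by
  simp [twoPoint, Measure.dirac_apply]

lemma lintegral_twoPoint [MeasurableSingletonClass α] (w : ℝ) (x y : α) (g : α → ℝ≥0∞) :
    ∫⁻ a, g a ∂twoPoint w x y = ENNReal.ofReal w * g x + ENNReal.ofReal (1 - w) * g y := by
  simp [twoPoint, lintegral_add_measure, lintegral_smul_measure, lintegral_dirac]

end TwoPoint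

noncomputable def witnessKernel (u : unitInterval) (p : ℝ) : Kernel Bool unitInterval :=
  Kernel.ofFunOfCountable fun b => if b then twoPoint p u 1 else Measure.dirac 1

lemma isMarkovKernel_witnessKernel (u : unitInterval) {p : ℝ} (hp : p ∈ Icc 0 1) :
    IsMarkovKernel (witnessKernel u p) :=
  ⟨fun b => by
    cases b
    · exact Measure.dirac.isProbabilityMeasure
    · exact isProbabilityMeasure_twoPoint hp _ _⟩

lemma isPKernel_witnessKernel {u : unitInterval} {p : ℝ} (hu : 0 < (u : ℝ))
    (hp : p ∈ Icc (u : ℝ) 1) :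
    IsPKernel (twoPoint (u / p) true false) (witnessKernel u p) := by
  have hp0 : 0 < p := hu.trans_le hp.1
  have := isMarkovKernel_witnessKernel u ⟨hp0.le, hp.2⟩
  have := isProbabilityMeasure_twoPoint
    ⟨div_nonneg hu.le hp0.le, div_le_one_of_le₀ hp.1 hp0.le⟩ true false
  intro α
  rcases eq_or_lt_of_le α.2.2 with hα | hα
  · calc ∫⁻ b, witnessKernel u p b (Iic α) ∂twoPoint (u / p) true false
        ≤ ∫⁻ _, 1 ∂twoPoint (u / p) true false := lintegral_mono fun b => prob_le_one
      _ = ENNReal.ofReal α := by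
        rw [lintegral_const, measure_univ, one_mul, hα, ENNReal.ofReal_one]
  have h1 : (1 : unitInterval) ∉ Iic α := fun h => hα.not_ge h
  have htrue : witnessKernel u p true (Iic α) = ENNReal.ofReal p * (Iic α).indicator 1 u := by
    simp [witnessKernel, Kernel.ofFunOfCountable, twoPoint_apply, h1]
  have hfalse : witnessKernel u p false (Iic α) = 0 := by
    simp [witnessKernel, Kernel.ofFunOfCountable, h1]
  rw [lintegral_twoPoint, htrue, hfalse, mul_zero, add_zero, ← mul_assoc,
    ← ENNReal.ofReal_mul (by positivity), div_mul_cancel₀ _ hp0.ne']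
  by_cases huα : u ∈ Iic α
  · simpa [indicator_of_mem huα] using ENNReal.ofReal_le_ofReal (Subtype.coe_le_coe.mpr huα)
  · simp [indicator_of_notMem huα]

lemma ofReal_le_lintegral_orderStatKernel_witnessKernel {n k : ℕ} (hk : 1 ≤ k) (hkn : k ≤ n)
    {f : unitInterval → unitInterval} (hf : Monotone f) {u : unitInterval} {p : ℝ}
    (hu : 0 < (u : ℝ)) (hp : p ∈ Icc (u : ℝ) 1) :
    ENNReal.ofReal (u / p * binTail n k p) ≤ ∫⁻ b, orderStatKernel n k f (witnessKernel u p) b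
      (Iic (f u)) ∂twoPoint (u / p) true false := by
  have hp0 : 0 < p := hu.trans_le hp.1
  have := isProbabilityMeasure_twoPoint (x := u) (y := 1) ⟨hp0.le, hp.2⟩
  set E := f ⁻¹' Iic (f u)
  have hpE : p ≤ (twoPoint p u 1).real E := by
    rw [measureReal_def, ← ENNReal.ofReal_le_iff_le_toReal (measure_ne_top _ _), twoPoint_apply,
      indicator_of_mem (show u ∈ E from le_rfl (a := f u)), Pi.one_apply, mul_one]
    exact le_self_add
  calc ENNReal.ofReal (u / p * binTail n k p)
      ≤ ENNReal.ofReal (u / p) * ENNReal.ofReal (binTail n k ((twoPoint p u 1).real E)) := by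
        rw [← ENNReal.ofReal_mul (by positivity)]
        exact ENNReal.ofReal_le_ofReal (mul_le_mul_of_nonneg_left (monotoneOn_binTail hk hkn
          ⟨hp0.le, hp.2⟩ ⟨hp0.le.trans hpE, measureReal_le_one⟩ hpE) (by positivity))
    _ = ENNReal.ofReal (u / p) * orderStatKernel n k f (witnessKernel u p) true (Iic (f u)) := by
        rw [orderStatKernel, ← map_orderStat_apply_Iic hk hkn hf]
        rfl
    _ ≤ _ := by
        rw [lintegral_twoPoint]
        exact le_self_add

theorem fnk_le_of_forall_isPKernel {n k : ℕ} (hk : 1 ≤ k) (hkn : k ≤ n)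
    {f : unitInterval → unitInterval} (hf : Monotone f)
    (h : ∀ (X : Type) (_ : MeasurableSpace X) (P : Measure X), IsProbabilityMeasure P →
      ∀ K : Kernel X unitInterval, IsMarkovKernel K → IsPKernel P K →
        IsPKernel P (orderStatKernel n k f K))
    (u : unitInterval) : fnk n k u ≤ f u := by
  rcases u.2.1.eq_or_lt with h0 | hu
  · simpa [fnk, ← h0] using (f u).2.1
  rw [fnk_le_iff n k ⟨hu, u.2.2⟩]
  intro p hp
  have hp0 : 0 < p := hu.trans_le hp.1
  have hθ : (u : ℝ) / p ∈ Icc 0 1 := ⟨by positivity, div_le_one_of_le₀ hp.1 hp0.le⟩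
  have := (ofReal_le_lintegral_orderStatKernel_witnessKernel hk hkn hf hu hp).trans
    (h Bool _ _ (isProbabilityMeasure_twoPoint hθ _ _) _
      (isMarkovKernel_witnessKernel u ⟨hp0.le, hp.2⟩) (isPKernel_witnessKernel hu hp) (f u))
  rw [ENNReal.ofReal_le_ofReal_iff (f u).2.1] at this
  rwa [psi_eq_div n k hp0.ne', ← mul_div_assoc, mul_div_right_comm]

/-- **Main theorem.**  For an increasing `f : [0,1] → [0,1]`, the kernel
`K_{n,k,f}(x,·) = (f ∘ U_{k:n})_* (K(x,·)^{⊗n})` is a P-kernel for every probability `P`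
and every P-kernel `K` for `P`, if and only if `f ≥ f_{n,k}` on `[0,1]`. -/
theorem combining_pvariables_main (n k : ℕ) (hk1 : 1 ≤ k) (hkn : k ≤ n)
    (f : unitInterval → unitInterval) (hf : Monotone f) :
    (∀ (X : Type) (_ : MeasurableSpace X) (P : Measure X), IsProbabilityMeasure P →
      ∀ K : Kernel X unitInterval, IsMarkovKernel K →
        (∀ α : unitInterval, ∫⁻ x, K x (Set.Iic α) ∂P ≤ ENNReal.ofReal (α : ℝ)) →
        ∀ α : unitInterval,
          ∫⁻ x, (Measure.pi fun _ : Fin n => K x).map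
              (fun u : Fin n → unitInterval => f (orderStat k u 0)) (Set.Iic α) ∂P
            ≤ ENNReal.ofReal (α : ℝ))
    ↔ ∀ u : unitInterval, fnk n k (u : ℝ) ≤ (f u : ℝ) := by
  exact ⟨fnk_le_of_forall_isPKernel hk1 hkn hf,
    fun hfnk X _ P _ K _ hK => isPKernel_orderStatKernel hk1 hkn hf hfnk hK⟩
end

section
/- Let n ∈ ℕ and 1 ≤ k ≤ n. Then (n/k)/(1 + 5 k^{-1/3}) ≤ c_{n,k} ≤ n/k. -/
/-!
Markov's inequality `k · B_{n,p}({k,…,n}) ≤ n p` gives `ψ_{n,k} ≤ n / k` pointwise. For the lower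
bound put `s = k^{1/3}` and evaluate `ψ_{n,k}` at `p = (s³ + 2 s²) / n` (at `p = 1` if this exceeds
`1`): the mean `n p` lies `2 s² + 1` above `k - 1`, so by Chebyshev the lower tail is at most
`n p / (2 s² + 1)² = O(1 / s)`, whence `ψ_{n,k}(p) ≥ p⁻¹ (1 - O(1 / s)) ≥ n / (s³ + 5 s²)`.
The binomial mean and variance are Mathlib's identities for Bernstein polynomials.
-/

open MeasureTheory

/-- `c_{n,k} = sup_{p ∈ [0,1]} ψ_{n,k}(p)`. -/
noncomputable def cnk (n k : ℕ) : ℝ := sSup (psi n k '' Set.Icc 0 1)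

open Finset Polynomial

section Bernstein

variable (n : ℕ) (p : ℝ)

lemma eval_bernsteinPolynomial (j : ℕ) :
    (bernsteinPolynomial ℝ n j).eval p = n.choose j * p ^ j * (1 - p) ^ (n - j) := by
  simp [bernsteinPolynomial]

lemma sum_eval_bernsteinPolynomial :
    ∑ j ∈ range (n + 1), (bernsteinPolynomial ℝ n j).eval p = 1 := by
  simpa [eval_finsetSum] using congrArg (eval p) (bernsteinPolynomial.sum ℝ n)

lemma sum_mul_eval_bernsteinPolynomial :
    ∑ j ∈ range (n + 1), j * (bernsteinPolynomial ℝ n j).eval p = n * p := by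
  simpa [eval_finsetSum] using congrArg (eval p) (bernsteinPolynomial.sum_smul ℝ n)

lemma sum_sq_mul_eval_bernsteinPolynomial :
    ∑ j ∈ range (n + 1), (n * p - j) ^ 2 * (bernsteinPolynomial ℝ n j).eval p
      = n * p * (1 - p) := by
  simpa [eval_finsetSum] using congrArg (eval p) (bernsteinPolynomial.variance ℝ n)

variable {p}

lemma eval_bernsteinPolynomial_nonneg (hp : p ∈ Set.Icc (0 : ℝ) 1) (j : ℕ) :
    0 ≤ (bernsteinPolynomial ℝ n j).eval p := by
  rw [eval_bernsteinPolynomial]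
  have h₀ := hp.1
  have h₁ := sub_nonneg.2 hp.2
  positivity

end Bernstein

section BinomialTail

variable {n k : ℕ} {p : ℝ}

lemma binTail_eq_sum_Ico :
    binTail n k p = ∑ j ∈ Ico k (n + 1), (bernsteinPolynomial ℝ n j).eval p := by
  simp only [binTail, eval_bernsteinPolynomial, Ico_add_one_right_eq_Icc]

lemma binTail_eq_one_sub (hk : k ≤ n + 1) :
    binTail n k p = 1 - ∑ j ∈ range k, (bernsteinPolynomial ℝ n j).eval p := by
  rw [binTail_eq_sum_Ico, ← sum_eval_bernsteinPolynomial n p, ← sum_range_add_sum_Ico _ hk]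
  ring

lemma natCast_mul_binTail_le (hp : p ∈ Set.Icc (0 : ℝ) 1) : k * binTail n k p ≤ n * p := by
  rw [← sum_mul_eval_bernsteinPolynomial n p, binTail_eq_sum_Ico, mul_sum]
  calc ∑ j ∈ Ico k (n + 1), (k : ℝ) * (bernsteinPolynomial ℝ n j).eval p
      ≤ ∑ j ∈ Ico k (n + 1), (j : ℝ) * (bernsteinPolynomial ℝ n j).eval p := by
        refine sum_le_sum fun j hj => ?_
        gcongr
        · exact eval_bernsteinPolynomial_nonneg n hp j
        · exact (mem_Ico.1 hj).1
    _ ≤ ∑ j ∈ range (n + 1), (j : ℝ) * (bernsteinPolynomial ℝ n j).eval p := by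
        refine sum_le_sum_of_subset_of_nonneg (fun j hj => ?_) fun j _ _ => ?_
        · exact mem_range.2 (mem_Ico.1 hj).2
        · exact mul_nonneg j.cast_nonneg (eval_bernsteinPolynomial_nonneg n hp j)

lemma one_sub_div_sq_le_binTail (hp : p ∈ Set.Icc (0 : ℝ) 1) (hk : k ≤ n + 1)
    (hmean : (k : ℝ) - 1 < n * p) :
    1 - n * p * (1 - p) / (n * p - (k - 1)) ^ 2 ≤ binTail n k p := by
  rw [binTail_eq_one_sub hk, sub_le_sub_iff_left, le_div_iff₀' (by nlinarith),
    ← sum_sq_mul_eval_bernsteinPolynomial, mul_sum]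
  calc ∑ j ∈ range k, (n * p - (k - 1)) ^ 2 * (bernsteinPolynomial ℝ n j).eval p
      ≤ ∑ j ∈ range k, (n * p - j) ^ 2 * (bernsteinPolynomial ℝ n j).eval p := by
        refine sum_le_sum fun j hj => ?_
        have : (j : ℝ) ≤ k - 1 := by
          rw [le_sub_iff_add_le]; exact_mod_cast mem_range.1 hj
        gcongr
        exact eval_bernsteinPolynomial_nonneg n hp j
    _ ≤ ∑ j ∈ range (n + 1), (n * p - j) ^ 2 * (bernsteinPolynomial ℝ n j).eval p :=
        sum_le_sum_of_subset_of_nonneg (range_subset_range.2 hk) fun j _ _ =>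
          mul_nonneg (sq_nonneg _) (eval_bernsteinPolynomial_nonneg n hp j)

end BinomialTail

section Psi

variable {n k : ℕ}

lemma psi_of_ne_zero {p : ℝ} (hp : p ≠ 0) : psi n k p = binTail n k p / p := by
  rw [psi, if_neg hp, inv_mul_eq_div]

lemma psi_le_div (hk : 1 ≤ k) {p : ℝ} (hp : p ∈ Set.Icc (0 : ℝ) 1) : psi n k p ≤ n / k := by
  rcases hp.1.eq_or_lt with rfl | hp0
  · by_cases hk1 : k = 1
    · simp [psi, hk1]
    · simp only [psi, if_true, if_neg hk1]
      positivity
  · rw [psi_of_ne_zero hp0.ne', div_le_div_iff₀ hp0 (by positivity)]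
    linarith [natCast_mul_binTail_le (n := n) (k := k) hp]

lemma cnk_le_div (hk : 1 ≤ k) : cnk n k ≤ n / k :=
  csSup_le ((Set.nonempty_Icc.2 zero_le_one).image _)
    (Set.forall_mem_image.2 fun _ hp => psi_le_div hk hp)

lemma psi_le_cnk (hk : 1 ≤ k) {p : ℝ} (hp : p ∈ Set.Icc (0 : ℝ) 1) : psi n k p ≤ cnk n k :=
  le_csSup ⟨n / k, Set.forall_mem_image.2 fun _ hq => psi_le_div hk hq⟩
    (Set.mem_image_of_mem _ hp)

lemma psi_one (hkn : k ≤ n) : psi n k 1 = 1 := by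
  simp [psi_of_ne_zero, binTail_eq_sum_Ico, bernsteinPolynomial.eval_at_1, hkn]

lemma div_mul_one_sub_le_cnk (hk : 1 ≤ k) {μ : ℝ} (hμk : (k : ℝ) - 1 < μ) (hμn : μ ≤ n) :
    n / μ * (1 - μ / (μ - (k - 1)) ^ 2) ≤ cnk n k := by
  have hμ : 0 < μ := by
    have : (1 : ℝ) ≤ k := by exact_mod_cast hk
    linarith
  have hn : (0 : ℝ) < n := hμ.trans_le hμn
  set p := μ / n with hp_def
  have hp : p ∈ Set.Icc (0 : ℝ) 1 := ⟨by positivity, div_le_one_of_le₀ hμn hn.le⟩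
  have hnp : n * p = μ := mul_div_cancel₀ μ hn.ne'
  have hkn : k ≤ n + 1 := by
    have : (k : ℝ) ≤ n + 1 := by linarith
    exact_mod_cast this
  have hcheb := one_sub_div_sq_le_binTail hp hkn (hnp ▸ hμk)
  rw [hnp] at hcheb
  calc n / μ * (1 - μ / (μ - (k - 1)) ^ 2)
      ≤ n / μ * (1 - μ * (1 - p) / (μ - (k - 1)) ^ 2) := by
        gcongr
        nlinarith [hp.1]
    _ ≤ n / μ * binTail n k p := by gcongr
    _ = psi n k p := by
        rw [psi_of_ne_zero (by positivity), hp_def, div_div_eq_mul_div]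
        ring
    _ ≤ cnk n k := psi_le_cnk hk hp

end Psi

lemma div_le_one_sub_div {s : ℝ} (hs : 0 < s) :
    (s ^ 3 + 2 * s ^ 2) / (s ^ 3 + 5 * s ^ 2) ≤ 1 - (s ^ 3 + 2 * s ^ 2) / (2 * s ^ 2 + 1) ^ 2 := by
  rw [le_sub_iff_add_le, div_add_div _ _ (by positivity) (by positivity), div_le_one (by positivity)]
  have key : (s ^ 3 + 5 * s ^ 2) * (2 * s ^ 2 + 1) ^ 2
      - ((s ^ 3 + 2 * s ^ 2) * (2 * s ^ 2 + 1) ^ 2 + (s ^ 3 + 5 * s ^ 2) * (s ^ 3 + 2 * s ^ 2))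
      = s ^ 2 * (s ^ 2 * (11 * (s - 7 / 22) ^ 2 + 39 / 44) + 3) := by ring
  linarith [key, show 0 ≤ s ^ 2 * (s ^ 2 * (11 * (s - 7 / 22) ^ 2 + 39 / 44) + 3) by positivity]

lemma div_le_cnk {n k : ℕ} (hk : 1 ≤ k) (hkn : k ≤ n) {s : ℝ} (hs : 0 < s) (hsk : s ^ 3 = k) :
    n / (s ^ 3 + 5 * s ^ 2) ≤ cnk n k := by
  rcases le_or_gt (n : ℝ) (s ^ 3 + 5 * s ^ 2) with hn | hn
  · calc n / (s ^ 3 + 5 * s ^ 2) ≤ 1 := div_le_one_of_le₀ hn (by positivity)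
      _ = psi n k 1 := (psi_one hkn).symm
      _ ≤ cnk n k := psi_le_cnk hk ⟨zero_le_one, le_rfl⟩
  · have hgap : (s ^ 3 + 2 * s ^ 2) - (k - 1) = 2 * s ^ 2 + 1 := by rw [← hsk]; ring
    have hbound := div_mul_one_sub_le_cnk hk (μ := s ^ 3 + 2 * s ^ 2) (by nlinarith) (by nlinarith)
    rw [hgap] at hbound
    calc n / (s ^ 3 + 5 * s ^ 2)
        = n / (s ^ 3 + 2 * s ^ 2) * ((s ^ 3 + 2 * s ^ 2) / (s ^ 3 + 5 * s ^ 2)) := by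
          field_simp
      _ ≤ n / (s ^ 3 + 2 * s ^ 2) * (1 - (s ^ 3 + 2 * s ^ 2) / (2 * s ^ 2 + 1) ^ 2) := by
          gcongr
          exact div_le_one_sub_div hs
      _ ≤ cnk n k := hbound

/-- Bounds for `c_{n,k}`:  `(n/k)/(1 + 5 k^{-1/3}) ≤ c_{n,k} ≤ n/k`. -/
theorem cnk_bounds (n k : ℕ) (hk1 : 1 ≤ k) (hkn : k ≤ n) :
    ((n : ℝ) / k) / (1 + 5 * (k : ℝ) ^ (-(1/3) : ℝ)) ≤ cnk n k ∧
    cnk n k ≤ (n : ℝ) / k := by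
  refine ⟨?_, cnk_le_div hk1⟩
  have hk : (0 : ℝ) < k := by exact_mod_cast hk1
  set s := (k : ℝ) ^ ((1 : ℝ) / 3)
  have hs : 0 < s := by positivity
  have hsk : s ^ 3 = k := by
    rw [← Real.rpow_natCast, ← Real.rpow_mul hk.le]
    norm_num
  have hs_inv : (k : ℝ) ^ (-(1/3) : ℝ) = s⁻¹ := Real.rpow_neg hk.le _
  calc (n : ℝ) / k / (1 + 5 * (k : ℝ) ^ (-(1/3) : ℝ)) = n / (s ^ 3 + 5 * s ^ 2) := by
        rw [hs_inv, ← hsk]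
        field_simp
    _ ≤ cnk n k := div_le_cnk hk1 hkn hs hsk
end

section
/- Let n ∈ ℕ with n ≥ 2 and 1 ≤ k ≤ n, and define φ(p) := B_{n,p}({k,…,n}) for p ∈ [0,1]. Then φ is strictly convex on the interval [0, (k-1)/(n-1)] and concave on the interval [(k-1)/(n-1), 1]. -/
/-!
`binTail n k` is the sum of the Bernstein polynomials `b_{n,j}`, `k ≤ j ≤ n`. Their derivatives
telescope, so for `k = i + 1`, `n = m + 1` the derivative of the tail is `n • b_{m,i}`. Since
`p (1 - p) b_{m,i}' = (i - m p) b_{m,i}` and `b_{m,i} > 0` on `(0, 1)`, the second derivative of the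
tail has the sign of `i - m p` there: positive below `i / m`, nonpositive above.
-/

open MeasureTheory

open Polynomial

namespace bernsteinPolynomial

variable {R : Type*} [CommRing R]

theorem X_mul_one_sub_X_mul_derivative (n ν : ℕ) :
    X * (1 - X) * derivative (bernsteinPolynomial R n ν) =
      ((ν : R[X]) - (n : R[X]) * X) * bernsteinPolynomial R n ν := by
  rcases lt_or_ge n ν with h | h
  · simp [eq_zero_of_lt R h]
  obtain ⟨m, rfl⟩ := Nat.exists_eq_add_of_le h
  simp only [bernsteinPolynomial, Nat.add_sub_cancel_left, derivative_mul, derivative_natCast,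
    derivative_pow, derivative_sub, derivative_one, derivative_X]
  rcases ν with _ | ν <;> rcases m with _ | m <;> simp [pow_succ] <;> ring

theorem eval_pos {n ν : ℕ} (h : ν ≤ n) {x : ℝ} (hx : x ∈ Set.Ioo 0 1) :
    0 < (bernsteinPolynomial ℝ n ν).eval x := by
  obtain ⟨hx0, hx1⟩ := hx
  have : 0 < 1 - x := sub_pos.2 hx1
  have : (0 : ℝ) < n.choose ν := mod_cast Nat.choose_pos h
  simp only [bernsteinPolynomial, eval_mul, eval_pow, eval_sub, eval_one, eval_X, eval_natCast]
  positivity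

end bernsteinPolynomial

noncomputable def bernsteinTail (R : Type*) [CommRing R] (n k : ℕ) : R[X] :=
  ∑ j ∈ Finset.Icc k n, bernsteinPolynomial R n j

namespace bernsteinTail

variable {R : Type*} [CommRing R]

theorem derivative_succ {n i : ℕ} (hi : i ≤ n) :
    derivative (bernsteinTail R (n + 1) (i + 1)) = (n + 1) * bernsteinPolynomial R n i := by
  rw [bernsteinTail, ← Finset.map_add_right_Icc, Finset.sum_map, derivative_sum]
  simp only [addRightEmbedding_apply, bernsteinPolynomial.derivative_succ_aux, ← Finset.mul_sum]
  congr 1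
  rw [← neg_inj, ← Finset.sum_neg_distrib]
  simp only [neg_sub]
  rw [Finset.sum_Icc_sub hi, bernsteinPolynomial.eq_zero_of_lt R n.lt_succ_self, zero_sub]

theorem X_mul_one_sub_X_mul_derivative_derivative_succ {n i : ℕ} (hi : i ≤ n) :
    (X : R[X]) * (1 - X) * derivative (derivative (bernsteinTail R (n + 1) (i + 1))) =
      ((n : R[X]) + 1) * (((i : R[X]) - (n : R[X]) * X) * bernsteinPolynomial R n i) := by
  rw [derivative_succ hi, derivative_mul, derivative_add, derivative_natCast, derivative_one,
    zero_add, zero_mul, zero_add]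
  linear_combination
    ((n : R[X]) + 1) * bernsteinPolynomial.X_mul_one_sub_X_mul_derivative (R := R) n i

end bernsteinTail

theorem binTail_eq_eval_bernsteinTail (n k : ℕ) :
    binTail n k = fun p => (bernsteinTail ℝ n k).eval p := by
  ext p
  simp [binTail, bernsteinTail, bernsteinPolynomial, eval_finsetSum]

namespace Polynomial

theorem deriv_fun_eval (P : ℝ[X]) : deriv (fun x => P.eval x) = fun x => P.derivative.eval x := by
  ext
  exact P.deriv

theorem iterate_deriv_two_eval (P : ℝ[X]) (x : ℝ) :
    deriv^[2] (fun x => P.eval x) x = (derivative (derivative P)).eval x := by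
  rw [Function.iterate_succ_apply', Function.iterate_one, deriv_fun_eval, Polynomial.deriv]

theorem strictConvexOn_eval_of_eval_derivative_derivative_pos (P : ℝ[X]) {D : Set ℝ}
    (hD : Convex ℝ D) (h : ∀ x ∈ interior D, 0 < (derivative (derivative P)).eval x) :
    StrictConvexOn ℝ D (fun x => P.eval x) :=
  strictConvexOn_of_deriv2_pos hD P.continuousOn fun x hx =>
    (iterate_deriv_two_eval P x).symm ▸ h x hx

theorem concaveOn_eval_of_eval_derivative_derivative_nonpos (P : ℝ[X]) {D : Set ℝ}
    (hD : Convex ℝ D) (h : ∀ x ∈ interior D, (derivative (derivative P)).eval x ≤ 0) :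
    ConcaveOn ℝ D (fun x => P.eval x) :=
  concaveOn_of_deriv2_nonpos hD P.continuousOn P.differentiable.differentiableOn
    (P.deriv_fun_eval ▸ P.derivative.differentiable.differentiableOn) fun x hx =>
    (iterate_deriv_two_eval P x).symm ▸ h x hx

end Polynomial

/-- `φ(p) = B_{n,p}({k,…,n})` is strictly convex on `[0,(k-1)/(n-1)]` and concave on
`[(k-1)/(n-1),1]` (for `n ≥ 2`). -/
theorem binTail_convex_concave (n k : ℕ) (hn : 2 ≤ n) (hk1 : 1 ≤ k) (hkn : k ≤ n) :
    StrictConvexOn ℝ (Set.Icc 0 (((k:ℝ) - 1) / ((n:ℝ) - 1))) (binTail n k) ∧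
    ConcaveOn ℝ (Set.Icc (((k:ℝ) - 1) / ((n:ℝ) - 1)) 1) (binTail n k) := by
  obtain ⟨i, rfl⟩ : ∃ i, k = i + 1 := ⟨k - 1, by omega⟩
  obtain ⟨m, rfl⟩ : ∃ m, n = m + 1 := ⟨n - 1, by omega⟩
  have hm : (0 : ℝ) < m := by exact_mod_cast (by omega : 0 < m)
  have hi : i ≤ m := by omega
  have hi' : (i : ℝ) ≤ m := by exact_mod_cast hi
  have hsign (x : ℝ) : x * (1 - x) *
      (derivative (derivative (bernsteinTail ℝ (m + 1) (i + 1)))).eval x =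
        (m + 1) * ((i - m * x) * (bernsteinPolynomial ℝ m i).eval x) := by
    simpa using congrArg (eval x) (bernsteinTail.X_mul_one_sub_X_mul_derivative_derivative_succ
      (R := ℝ) hi)
  push_cast
  simp only [add_sub_cancel_right, binTail_eq_eval_bernsteinTail]
  refine ⟨strictConvexOn_eval_of_eval_derivative_derivative_pos _ (convex_Icc _ _) fun x hx => ?_,
    concaveOn_eval_of_eval_derivative_derivative_nonpos _ (convex_Icc _ _) fun x hx => ?_⟩
  · rw [interior_Icc] at hx
    obtain ⟨hx0, hxi⟩ := hx
    have hx1 : x < 1 := hxi.trans_le (div_le_one_of_le₀ hi' hm.le)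
    have hmx : m * x < i := (lt_div_iff₀' hm).1 hxi
    have hB := bernsteinPolynomial.eval_pos hi ⟨hx0, hx1⟩
    refine pos_of_mul_pos_right ?_ (mul_pos hx0 (sub_pos.2 hx1)).le
    rw [hsign]
    have : 0 < (i : ℝ) - m * x := sub_pos.2 hmx
    positivity
  · rw [interior_Icc] at hx
    obtain ⟨hix, hx1⟩ := hx
    have hx0 : 0 < x := (by positivity : (0 : ℝ) ≤ i / m).trans_lt hix
    have hmx : (i : ℝ) < m * x := (div_lt_iff₀' hm).1 hix
    have hB := bernsteinPolynomial.eval_pos hi ⟨hx0, hx1⟩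
    refine nonpos_of_mul_nonpos_right ?_ (mul_pos hx0 (sub_pos.2 hx1))
    rw [hsign]
    have : (i : ℝ) - m * x ≤ 0 := by linarith
    exact mul_nonpos_of_nonneg_of_nonpos (by positivity)
      (mul_nonpos_of_nonpos_of_nonneg this hB.le)
end

section
/- Let n ∈ ℕ with n ≥ 2, let 1 ≤ k ≤ n, and let p* ∈ [0,1] be a maximizer of ψ_{n,k} on [0,1]. Then for every u ∈ [0,1], the supremum sup_{p ∈ [u,1]} ψ_{n,k}(p) is attained at max(p*, u); that is, f_{n,k}(u) = u · ψ_{n,k}(max(p*, u)). In particular f_{n,k}(u) = B_{n,u}({k,…,n}) for u ∈ [p*, 1]. -/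
open MeasureTheory

/-!
Write `B = binTail n k`, so `ψ = B / p`. The derivative of the tail sum telescopes to
`B'(p) = k C(n,k) p^(k-1) (1-p)^(n-k)`, hence `p² ψ'(p) = p B'(p) - B(p) = p^k (1-p)^(n-k) G(p)`
with `G = psiDerivFactor n k`, which decreases on `[0,1)` because `p / (1 - p)` increases.
So if `G(q) > 0`, then `ψ` increases strictly on `[0,q]` (for `k ≥ 1`, `ψ` is a polynomial,
hence continuous at `0`). As `p*` maximizes `ψ`, this forces `G ≤ 0` on `(p*,1)`, so `ψ`
decreases on `[p*,1]`.
-/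

open Finset

noncomputable def psiDerivFactor (n k : ℕ) (p : ℝ) : ℝ :=
  (k - 1) * n.choose k - ∑ j ∈ Icc (k + 1) n, n.choose j * (p / (1 - p)) ^ (j - k)

section

variable {n k : ℕ}

lemma psi_eq_sum (hk : 1 ≤ k) (p : ℝ) :
    psi n k p = ∑ j ∈ Icc k n, (n.choose j : ℝ) * p ^ (j - 1) * (1 - p) ^ (n - j) := by
  rcases eq_or_ne p 0 with rfl | hp
  · have hterm : ∀ j ∈ Icc k n, (n.choose j : ℝ) * 0 ^ (j - 1) * (1 - 0) ^ (n - j)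
        = if j = 1 then (n : ℝ) else 0 := by
      intro j hj
      split_ifs with h
      · simp [h]
      · simp [zero_pow (show j - 1 ≠ 0 by grind)]
    rw [sum_congr rfl hterm, sum_ite_eq', psi, if_pos rfl]
    split_ifs <;> simp_all; omega
  · rw [psi, if_neg hp, binTail, mul_sum]
    refine sum_congr rfl fun j hj => ?_
    rw [← pow_sub_one_mul (by grind : j ≠ 0)]
    field_simp

lemma mul_psi (hk : 1 ≤ k) (p : ℝ) : p * psi n k p = binTail n k p := by
  rw [psi_eq_sum hk, binTail, mul_sum]
  refine sum_congr rfl fun j hj => ?_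
  rw [← pow_sub_one_mul (by grind : j ≠ 0)]
  ring

lemma continuous_psi (hk : 1 ≤ k) : Continuous (psi n k) := by
  simp_rw [funext (psi_eq_sum (n := n) hk)]
  fun_prop

lemma binTail_hasDerivAt (hkn : k ≤ n) (p : ℝ) :
    HasDerivAt (binTail n k) (k * n.choose k * p ^ (k - 1) * (1 - p) ^ (n - k)) p := by
  set a : ℕ → ℝ := fun j => j * n.choose j * p ^ (j - 1) * (1 - p) ^ (n - j) with ha
  have hterm : ∀ j ∈ Icc k n, HasDerivAt (fun x : ℝ => n.choose j * x ^ j * (1 - x) ^ (n - j))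
      (-(a (j + 1) - a j)) p := by
    intro j _
    have hpascal : (n.choose (j + 1) : ℝ) * (j + 1 : ℕ) = n.choose j * (n - j : ℕ) := by
      exact_mod_cast Nat.choose_succ_right_eq n j
    refine (((hasDerivAt_pow j p).const_mul _).fun_mul
      (((hasDerivAt_id' p).const_sub 1).fun_pow (n - j))).congr_deriv ?_
    simp only [ha, Nat.add_sub_cancel, ← Nat.sub_sub]
    linear_combination (p ^ j * (1 - p) ^ (n - j - 1)) * hpascal
  have hlast : a (n + 1) = 0 := by simp [ha, Nat.choose_succ_self]
  have h := HasDerivAt.fun_sum hterm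
  rw [sum_neg_distrib, sum_Icc_sub hkn, hlast, zero_sub, neg_neg] at h
  exact h

lemma antitoneOn_psiDerivFactor : AntitoneOn (psiDerivFactor n k) (Set.Ico 0 1) := by
  intro p ⟨hp0, hp1⟩ q ⟨_, hq1⟩ hpq
  have hratio : p / (1 - p) ≤ q / (1 - q) :=
    div_le_div₀ (hp0.trans hpq) hpq (by linarith) (by linarith)
  have hsum := sum_le_sum fun j (_ : j ∈ Icc (k + 1) n) =>
    mul_le_mul_of_nonneg_left
      (pow_le_pow_left₀ (div_nonneg hp0 (by linarith)) hratio (j - k)) (n.choose j).cast_nonneg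
  simp only [psiDerivFactor]
  linarith

lemma kChoose_mul_sub_binTail_eq (hkn : k ≤ n) {p : ℝ} (hp : p < 1) :
    k * n.choose k * p ^ k * (1 - p) ^ (n - k) - binTail n k p
      = p ^ k * (1 - p) ^ (n - k) * psiDerivFactor n k p := by
  have hsplit : Icc k n = insert k (Icc (k + 1) n) := by
    ext j; simp only [mem_Icc, mem_insert]; omega
  have hterm : ∀ j ∈ Icc (k + 1) n,
      p ^ k * (1 - p) ^ (n - k) * (n.choose j * (p / (1 - p)) ^ (j - k))
        = n.choose j * p ^ j * (1 - p) ^ (n - j) := by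
    intro j hj
    obtain ⟨hkj, hjn⟩ := mem_Icc.mp hj
    have hq : 1 - p ≠ 0 := by linarith
    have hexp : n - k - (n - j) = j - k := by omega
    rw [div_pow, ← pow_sub_mul_pow p (by omega : k ≤ j),
      ← pow_sub_mul_pow (1 - p) (by omega : n - j ≤ n - k), hexp]
    field_simp
  rw [binTail, hsplit, sum_insert (by simp), psiDerivFactor, mul_sub, mul_sum, sum_congr rfl hterm]
  ring

lemma psi_hasDerivAt (hkn : k ≤ n) {p : ℝ} (hp0 : 0 < p) (hp1 : p < 1) :
    HasDerivAt (psi n k) (p ^ k * (1 - p) ^ (n - k) * psiDerivFactor n k p / p ^ 2) p := by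
  have hquot := (binTail_hasDerivAt hkn p).div (hasDerivAt_id p) hp0.ne'
  have hpsi : psi n k =ᶠ[nhds p] fun x => binTail n k x / id x := by
    filter_upwards [eventually_ne_nhds hp0.ne'] with x hx
    rw [psi, if_neg hx, id, inv_mul_eq_div]
  refine (hquot.congr_of_eventuallyEq hpsi).congr_deriv ?_
  rw [← kChoose_mul_sub_binTail_eq hkn hp1, id]
  rcases k with _ | k
  · simp
  · simp only [Nat.add_sub_cancel, pow_succ]
    ring

lemma strictMonoOn_psi_of_psiDerivFactor_pos (hk : 1 ≤ k) (hkn : k ≤ n) {q : ℝ} (hq1 : q < 1)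
    (hq : 0 < psiDerivFactor n k q) : StrictMonoOn (psi n k) (Set.Icc 0 q) := by
  refine strictMonoOn_of_deriv_pos (convex_Icc 0 q) (continuous_psi hk).continuousOn ?_
  intro x hx
  rw [interior_Icc] at hx
  obtain ⟨hx0, hxq⟩ := hx
  rw [(psi_hasDerivAt hkn hx0 (hxq.trans hq1)).deriv]
  have : 0 < psiDerivFactor n k x := hq.trans_le <|
    antitoneOn_psiDerivFactor ⟨hx0.le, hxq.trans hq1⟩ ⟨hx0.le.trans hxq.le, hq1⟩ hxq.le
  have : 0 < 1 - x := by linarith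
  positivity

lemma antitoneOn_psi_of_isMaxOn (hk : 1 ≤ k) (hkn : k ≤ n) {pstar : ℝ} (hpstar : 0 ≤ pstar)
    (hmax : IsMaxOn (psi n k) (Set.Icc 0 1) pstar) : AntitoneOn (psi n k) (Set.Icc pstar 1) := by
  have hfactor : ∀ x ∈ Set.Ioo pstar 1, psiDerivFactor n k x ≤ 0 := by
    intro x ⟨hpx, hx1⟩
    by_contra! hpos
    have hlt := strictMonoOn_psi_of_psiDerivFactor_pos hk hkn hx1 hpos
      ⟨hpstar, hpx.le⟩ ⟨hpstar.trans hpx.le, le_rfl⟩ hpx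
    exact hlt.not_ge (hmax ⟨hpstar.trans hpx.le, hx1.le⟩)
  refine antitoneOn_of_deriv_nonpos (convex_Icc pstar 1) (continuous_psi hk).continuousOn
    (fun x hx => ?_) (fun x hx => ?_) <;> rw [interior_Icc] at hx
  · exact (psi_hasDerivAt hkn (hpstar.trans_lt hx.1) hx.2).differentiableAt.differentiableWithinAt
  · rw [(psi_hasDerivAt hkn (hpstar.trans_lt hx.1) hx.2).deriv]
    have : 0 < 1 - x := by linarith [hx.2]
    have : 0 < x := hpstar.trans_lt hx.1
    exact div_nonpos_of_nonpos_of_nonneg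
      (mul_nonpos_of_nonneg_of_nonpos (by positivity) (hfactor x hx)) (sq_nonneg x)

end

theorem fnk_eq_repr_general (n k : ℕ) (hk1 : 1 ≤ k) (hkn : k ≤ n)
    (pstar : ℝ) (hpstar : pstar ∈ Set.Icc (0:ℝ) 1)
    (hmax : ∀ p ∈ Set.Icc (0:ℝ) 1, psi n k p ≤ psi n k pstar) :
    (∀ u ∈ Set.Icc (0:ℝ) 1,
      IsGreatest (psi n k '' Set.Icc u 1) (psi n k (max pstar u)) ∧
      fnk n k u = u * psi n k (max pstar u)) ∧
    (∀ u ∈ Set.Icc pstar 1, fnk n k u = binTail n k u) := by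
  have hanti := antitoneOn_psi_of_isMaxOn hk1 hkn hpstar.1 (isMaxOn_iff.mpr hmax)
  have hgreatest : ∀ u ∈ Set.Icc (0:ℝ) 1,
      IsGreatest (psi n k '' Set.Icc u 1) (psi n k (max pstar u)) := by
    intro u hu
    refine ⟨Set.mem_image_of_mem _ ⟨le_max_right _ _, max_le hpstar.2 hu.2⟩, ?_⟩
    rintro _ ⟨p, hp, rfl⟩
    rcases le_total u pstar with h | h
    · rw [max_eq_left h]
      exact hmax p ⟨hu.1.trans hp.1, hp.2⟩
    · rw [max_eq_right h]
      exact hanti ⟨h, hu.2⟩ ⟨h.trans hp.1, hp.2⟩ hp.1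
  have hfnk : ∀ u ∈ Set.Icc (0:ℝ) 1, fnk n k u = u * psi n k (max pstar u) := fun u hu => by
    rw [fnk, (hgreatest u hu).csSup_eq]
  refine ⟨fun u hu => ⟨hgreatest u hu, hfnk u hu⟩, fun u hu => ?_⟩
  rw [hfnk u ⟨hpstar.1.trans hu.1, hu.2⟩, max_eq_right hu.1, mul_psi hk1]

/-- For `n ≥ 2` and any maximizer `p*` of `ψ_{n,k}` on `[0,1]`, the supremum
`sup_{p ∈ [u,1]} ψ_{n,k}(p)` is attained at `max(p*,u)`, so that
`f_{n,k}(u) = u ⋅ ψ_{n,k}(max(p*,u))`; in particular `f_{n,k}(u) = B_{n,u}({k,…,n})`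
for `u ∈ [p*,1]`. -/
theorem fnk_eq_repr (n k : ℕ) (hn : 2 ≤ n) (hk1 : 1 ≤ k) (hkn : k ≤ n)
    (pstar : ℝ) (hpstar : pstar ∈ Set.Icc (0:ℝ) 1)
    (hmax : ∀ p ∈ Set.Icc (0:ℝ) 1, psi n k p ≤ psi n k pstar) :
    (∀ u ∈ Set.Icc (0:ℝ) 1,
      IsGreatest (psi n k '' Set.Icc u 1) (psi n k (max pstar u)) ∧
      fnk n k u = u * psi n k (max pstar u)) ∧
    (∀ u ∈ Set.Icc pstar 1, fnk n k u = binTail n k u) :=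
  fnk_eq_repr_general n k hk1 hkn pstar hpstar hmax
end

section
/- Let n ∈ ℕ, 1 ≤ k ≤ n and p ∈ (0,1] with k < np. Then B_{n,p}({k,…,n}) ≥ (np-k)^2 / (np(1-p) + (np-k)^2). -/
open MeasureTheory

/-!
Let `X ~ Bin(n, p)` and `Y = X - k`, so `E[Y] = np - k > 0` and `E[Y²] = np(1-p) + (np-k)²`.
Since `Y < 0` off the event `{X ≥ k}`, `E[Y] ≤ E[Y ; X ≥ k]`, and Cauchy–Schwarz gives
`E[Y ; X ≥ k]² ≤ P(X ≥ k) E[Y²]`.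
-/

open Finset Polynomial

theorem Finset.sq_sum_mul_le_sum_mul_sum_sq_mul {ι R : Type*} [DecidableEq ι] [CommRing R]
    [LinearOrder R] [IsStrictOrderedRing R] {s u : Finset ι} (hus : u ⊆ s) {w f : ι → R}
    (hw : ∀ i ∈ s, 0 ≤ w i) (hf : ∀ i ∈ s \ u, f i ≤ 0) (h0 : 0 ≤ ∑ i ∈ s, f i * w i) :
    (∑ i ∈ s, f i * w i) ^ 2 ≤ (∑ i ∈ u, w i) * ∑ i ∈ s, f i ^ 2 * w i := by
  have hwu : ∀ i ∈ u, 0 ≤ w i := fun i hi => hw i (hus hi)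
  have h_restrict : ∑ i ∈ s, f i * w i ≤ ∑ i ∈ u, f i * w i := by
    rw [← sum_sdiff hus]
    have : ∑ i ∈ s \ u, f i * w i ≤ 0 := sum_nonpos fun i hi =>
      mul_nonpos_of_nonpos_of_nonneg (hf i hi) (hw i (mem_sdiff.mp hi).1)
    linarith
  calc (∑ i ∈ s, f i * w i) ^ 2
      ≤ (∑ i ∈ u, f i * w i) ^ 2 := pow_le_pow_left₀ h0 h_restrict 2
    _ ≤ (∑ i ∈ u, w i) * ∑ i ∈ u, f i ^ 2 * w i :=
        sum_sq_le_sum_mul_sum_of_sq_le_mul u hwu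
          (fun i hi => mul_nonneg (sq_nonneg _) (hwu i hi)) fun i _ => le_of_eq (by ring)
    _ ≤ (∑ i ∈ u, w i) * ∑ i ∈ s, f i ^ 2 * w i :=
        mul_le_mul_of_nonneg_left
          (sum_le_sum_of_subset_of_nonneg hus fun i hi _ => mul_nonneg (sq_nonneg _) (hw i hi))
          (sum_nonneg hwu)

namespace bernsteinPolynomial

section CommRing

variable {R : Type*} [CommRing R] (n : ℕ) (x : R)

theorem eval_eq (ν : ℕ) :
    (bernsteinPolynomial R n ν).eval x = n.choose ν * x ^ ν * (1 - x) ^ (n - ν) := by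
  simp [bernsteinPolynomial]

theorem sum_eval : ∑ ν ∈ range (n + 1), (bernsteinPolynomial R n ν).eval x = 1 := by
  simpa [eval_finsetSum] using congrArg (eval x) (bernsteinPolynomial.sum R n)

theorem sum_mul_eval : ∑ ν ∈ range (n + 1), ν * (bernsteinPolynomial R n ν).eval x = n * x := by
  simpa [eval_finsetSum] using congrArg (eval x) (bernsteinPolynomial.sum_smul R n)

theorem sum_sub_mul_eval (c : R) :
    ∑ ν ∈ range (n + 1), (ν - c) * (bernsteinPolynomial R n ν).eval x = n * x - c := by
  simp only [sub_mul, sum_sub_distrib, ← mul_sum, sum_mul_eval, sum_eval, mul_one]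

theorem sum_sub_sq_mul_eval (c : R) :
    ∑ ν ∈ range (n + 1), (ν - c) ^ 2 * (bernsteinPolynomial R n ν).eval x
      = n * x * (1 - x) + (n * x - c) ^ 2 := by
  have h_var : ∑ ν ∈ range (n + 1), (n * x - ν) ^ 2 * (bernsteinPolynomial R n ν).eval x
      = n * x * (1 - x) := by
    simpa [eval_finsetSum] using congrArg (eval x) (bernsteinPolynomial.variance R n)
  have h_mean := sum_sub_mul_eval n x (n * x)
  rw [sub_self] at h_mean
  calc ∑ ν ∈ range (n + 1), (ν - c) ^ 2 * (bernsteinPolynomial R n ν).eval x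
      = ∑ ν ∈ range (n + 1), ((n * x - ν) ^ 2 * (bernsteinPolynomial R n ν).eval x
          + 2 * (n * x - c) * ((ν - n * x) * (bernsteinPolynomial R n ν).eval x)
          + (n * x - c) ^ 2 * (bernsteinPolynomial R n ν).eval x) :=
        sum_congr rfl fun ν _ => by ring
    _ = n * x * (1 - x) + (n * x - c) ^ 2 := by
        rw [sum_add_distrib, sum_add_distrib, ← mul_sum, ← mul_sum, h_var, h_mean, sum_eval]
        ring

end CommRing

theorem eval_nonneg {R : Type*} [CommRing R] [PartialOrder R] [IsOrderedRing R] (n ν : ℕ)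
    {x : R} (hx0 : 0 ≤ x) (hx1 : x ≤ 1) : 0 ≤ (bernsteinPolynomial R n ν).eval x := by
  rw [eval_eq]
  have : 0 ≤ 1 - x := sub_nonneg.mpr hx1
  positivity

end bernsteinPolynomial

theorem binTail_eq_sum_eval_bernsteinPolynomial (n k : ℕ) (p : ℝ) :
    binTail n k p = ∑ j ∈ Icc k n, (bernsteinPolynomial ℝ n j).eval p := by
  simp only [binTail, bernsteinPolynomial.eval_eq]

theorem binTail_chebyshev_general (n k : ℕ)
    (p : ℝ) (hp : p ∈ Set.Ioc (0:ℝ) 1) (hknp : (k : ℝ) < (n : ℝ) * p) :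
    ((n : ℝ) * p - k) ^ 2 / ((n : ℝ) * p * (1 - p) + ((n : ℝ) * p - k) ^ 2)
      ≤ binTail n k p := by
  obtain ⟨hp0, hp1⟩ := hp
  have h_mean_pos : 0 < (n : ℝ) * p - k := sub_pos.mpr hknp
  have h_var_nonneg : 0 ≤ (n : ℝ) * p * (1 - p) := by
    have : 0 ≤ 1 - p := sub_nonneg.mpr hp1
    positivity
  have h_second_moment := Finset.sq_sum_mul_le_sum_mul_sum_sq_mul
    (s := range (n + 1)) (u := Icc k n) (f := fun j => (j : ℝ) - k)
    (fun j hj => by simp only [mem_Icc] at hj; simp only [mem_range]; omega)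
    (fun j _ => bernsteinPolynomial.eval_nonneg n j hp0.le hp1)
    (fun j hj => by
      simp only [mem_sdiff, mem_range, mem_Icc, not_and, not_le] at hj
      simp only [sub_nonpos, Nat.cast_le]; omega)
    (by rw [bernsteinPolynomial.sum_sub_mul_eval]; exact h_mean_pos.le)
  rw [bernsteinPolynomial.sum_sub_mul_eval, bernsteinPolynomial.sum_sub_sq_mul_eval,
    ← binTail_eq_sum_eval_bernsteinPolynomial] at h_second_moment
  rw [div_le_iff₀ (by positivity)]
  linarith

/-- One-sided Chebyshev bound:  for `p ∈ (0,1]` with `k < np`,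
`B_{n,p}({k,…,n}) ≥ (np-k)² / (np(1-p) + (np-k)²)`. -/
theorem binTail_chebyshev (n k : ℕ) (hk1 : 1 ≤ k) (hkn : k ≤ n)
    (p : ℝ) (hp : p ∈ Set.Ioc (0:ℝ) 1) (hknp : (k : ℝ) < (n : ℝ) * p) :
    ((n : ℝ) * p - k) ^ 2 / ((n : ℝ) * p * (1 - p) + ((n : ℝ) * p - k) ^ 2)
      ≤ binTail n k p :=
  binTail_chebyshev_general n k p hp hknp
end
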